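/- Let n ≥ 3 be an odd integer with n ≠ 5, and let A_1, A_2, A_3 be three pairwise distinct subsets of {1, …, n}, each of size at least (n+1)/2. Then {A_1, A_2, A_3} forms a Berge-K_3; equivalently, there exist three pairwise distinct elements x_1 ∈ A_1 ∩ A_2, x_2 ∈ A_2 ∩ A_3, and x_3 ∈ A_3 ∩ A_1. -/

import Mathlib

/-!
Write `n = 2m + 1`, so every `Aᵢ` has at least `m + 1` elements. A Berge triangle is a system of
distinct representatives of the three pairwise intersections `Aᵢ ∩ Aⱼ`, so by Hall's theorem it
suffices to check Hall's condition. Two sets of size `> n / 2` meet; two of the intersections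
together form `Aⱼ ∩ (Aᵢ ∪ Aₖ)`, where `Aᵢ ∪ Aₖ` has at least `m + 2` elements because `Aᵢ ≠ Aₖ`, so
it has at least two elements. Finally, an element lies in at most three of the `Aᵢ`, and in at most
one unless it lies in two intersections, so `3(m + 1) ≤ n + 2u` where `u` is the size of the union
of the intersections; for `m ≥ 3` this forces `u ≥ 3`. The case `n = 3` is checked exhaustively.
-/

open Finset

variable {α : Type*} [DecidableEq α]

lemma card_add_card_le_card_add_card_inter [Fintype α] (s t : Finset α) :
    #s + #t ≤ Fintype.card α + #(s ∩ t) := by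
  rw [← card_union_add_card_inter]
  gcongr
  exact card_le_univ _

lemma lt_card_union_of_ne {s t : Finset α} {k : ℕ} (hst : s ≠ t) (hs : k ≤ #s) (ht : k ≤ #t) :
    k < #(s ∪ t) := by
  by_contra! h
  have hs_eq : s = s ∪ t := eq_of_subset_of_card_le subset_union_left (by omega)
  have ht_eq : t = s ∪ t := eq_of_subset_of_card_le subset_union_right (by omega)
  exact hst (hs_eq.trans ht_eq.symm)

lemma card_add_card_add_card_le [Fintype α] (A B C : Finset α) :
    #A + #B + #C ≤ Fintype.card α + 2 * #(A ∩ B ∪ B ∩ C ∪ C ∩ A) := by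
  have hAB : A ∩ B ⊆ A ∩ B ∪ B ∩ C ∪ C ∩ A := fun x hx => by simp_all
  have hC : C ∩ (A ∪ B) ⊆ A ∩ B ∪ B ∩ C ∪ C ∩ A := fun x hx => by simp at hx ⊢; tauto
  have hunion := card_union_add_card_inter A B
  have hinter := card_add_card_le_card_add_card_inter C (A ∪ B)
  have := card_le_card hAB
  have := card_le_card hC
  omega

/-- Hall's theorem for three sets. -/
lemma exists_distinct_mem_of_card_union {B₁ B₂ B₃ : Finset α}
    (h₁ : B₁.Nonempty) (h₂ : B₂.Nonempty) (h₃ : B₃.Nonempty)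
    (h₁₂ : 2 ≤ #(B₁ ∪ B₂)) (h₁₃ : 2 ≤ #(B₁ ∪ B₃)) (h₂₃ : 2 ≤ #(B₂ ∪ B₃))
    (h₁₂₃ : 3 ≤ #(B₁ ∪ B₂ ∪ B₃)) :
    ∃ x₁ x₂ x₃ : α, x₁ ≠ x₂ ∧ x₁ ≠ x₃ ∧ x₂ ≠ x₃ ∧ x₁ ∈ B₁ ∧ x₂ ∈ B₂ ∧ x₃ ∈ B₃ := by
  have hall : ∀ s : Finset (Fin 3), #s ≤ #(s.biUnion ![B₁, B₂, B₃]) := by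
    intro s
    have hs : s ∈ ({∅, {0}, {1}, {2}, {0, 1}, {0, 2}, {1, 2}, {0, 1, 2}} :
        Finset (Finset (Fin 3))) := by
      revert s; decide
    simp only [mem_insert, mem_singleton] at hs
    rcases hs with rfl | rfl | rfl | rfl | rfl | rfl | rfl | rfl <;>
      simp [biUnion_insert, ← union_assoc, *]
  obtain ⟨f, hf_inj, hf_mem⟩ := (all_card_le_biUnion_card_iff_exists_injective _).mp hall
  exact ⟨f 0, f 1, f 2, hf_inj.ne (by decide), hf_inj.ne (by decide), hf_inj.ne (by decide),
    hf_mem 0, hf_mem 1, hf_mem 2⟩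

section LargeSets

variable [Fintype α] {k : ℕ}

lemma inter_nonempty_of_card_lt (hk : Fintype.card α < 2 * k) {A B : Finset α}
    (hA : k ≤ #A) (hB : k ≤ #B) : (A ∩ B).Nonempty := by
  have := card_add_card_le_card_add_card_inter A B
  exact card_pos.mp (by omega)

lemma two_le_card_inter_union_of_card_lt (hk : Fintype.card α < 2 * k) {A B C : Finset α}
    (hAC : A ≠ C) (hA : k ≤ #A) (hB : k ≤ #B) (hC : k ≤ #C) : 2 ≤ #(A ∩ B ∪ B ∩ C) := by
  have hunion := lt_card_union_of_ne hAC hA hC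
  have hinter := card_add_card_le_card_add_card_inter B (A ∪ C)
  have heq : A ∩ B ∪ B ∩ C = B ∩ (A ∪ C) := by ext; simp; tauto
  rw [heq]
  omega

theorem exists_berge_triangle_of_card_lt (hk₂ : Fintype.card α < 2 * k)
    (hk₃ : Fintype.card α + 5 ≤ 3 * k) {A₁ A₂ A₃ : Finset α}
    (h₁₂ : A₁ ≠ A₂) (h₁₃ : A₁ ≠ A₃) (h₂₃ : A₂ ≠ A₃)
    (hc₁ : k ≤ #A₁) (hc₂ : k ≤ #A₂) (hc₃ : k ≤ #A₃) :
    ∃ x₁ x₂ x₃ : α, x₁ ≠ x₂ ∧ x₁ ≠ x₃ ∧ x₂ ≠ x₃ ∧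
      x₁ ∈ A₁ ∩ A₂ ∧ x₂ ∈ A₂ ∩ A₃ ∧ x₃ ∈ A₃ ∩ A₁ := by
  have h₁₂₃ : 3 ≤ #(A₁ ∩ A₂ ∪ A₂ ∩ A₃ ∪ A₃ ∩ A₁) := by
    have := card_add_card_add_card_le A₁ A₂ A₃
    omega
  refine exists_distinct_mem_of_card_union (inter_nonempty_of_card_lt hk₂ hc₁ hc₂)
    (inter_nonempty_of_card_lt hk₂ hc₂ hc₃) (inter_nonempty_of_card_lt hk₂ hc₃ hc₁)
    (two_le_card_inter_union_of_card_lt hk₂ h₁₃ hc₁ hc₂ hc₃) ?_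
    (two_le_card_inter_union_of_card_lt hk₂ h₁₂.symm hc₂ hc₃ hc₁) h₁₂₃
  rw [union_comm]
  exact two_le_card_inter_union_of_card_lt hk₂ h₂₃.symm hc₃ hc₁ hc₂

end LargeSets

/-- For odd `n ≥ 3`, `n ≠ 5`, any three pairwise distinct subsets of an `n`-set, each of size at
least `(n+1)/2`, form a Berge-`K₃`: there are three pairwise distinct elements
`x₁ ∈ A₁ ∩ A₂`, `x₂ ∈ A₂ ∩ A₃` and `x₃ ∈ A₃ ∩ A₁`. -/
theorem large_sets_form_berge_triangle (n : ℕ) (hn : 3 ≤ n) (hodd : Odd n) (hn5 : n ≠ 5)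
    (A₁ A₂ A₃ : Finset (Fin n))
    (h₁₂ : A₁ ≠ A₂) (h₁₃ : A₁ ≠ A₃) (h₂₃ : A₂ ≠ A₃)
    (hc₁ : (n + 1) / 2 ≤ A₁.card) (hc₂ : (n + 1) / 2 ≤ A₂.card)
    (hc₃ : (n + 1) / 2 ≤ A₃.card) :
    ∃ x₁ x₂ x₃ : Fin n, x₁ ≠ x₂ ∧ x₁ ≠ x₃ ∧ x₂ ≠ x₃ ∧
      x₁ ∈ A₁ ∩ A₂ ∧ x₂ ∈ A₂ ∩ A₃ ∧ x₃ ∈ A₃ ∩ A₁ := by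
  obtain ⟨m, rfl⟩ := hodd
  rw [show (2 * m + 1 + 1) / 2 = m + 1 by omega] at hc₁ hc₂ hc₃
  obtain rfl | hm := eq_or_ne m 1
  · revert A₁ A₂ A₃
    decide
  exact exists_berge_triangle_of_card_lt (by rw [Fintype.card_fin]; omega)
    (by rw [Fintype.card_fin]; omega) h₁₂ h₁₃ h₂₃ hc₁ hc₂ hc₃
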